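/- (One-step stability of the inverse multiscale transform.) Let p ≥ 1, let μ, ν ∈ P_p(ℝ^d), and let ψ, ψ̃ : ℝ^d → ℝ^d be Borel measurable maps with ∫‖ψ̃‖^p dν < ∞ such that the map I + ψ (where I is the identity of ℝ^d) is Lipschitz with Lipschitz constant at most C. Then W_p((I+ψ)_#μ, (I+ψ̃)_#ν) ≤ C·W_p(μ, ν) + （∫_{ℝ^d} ‖ψ(x) − ψ̃(x)‖^p dν(x)）^{1/p}. -/

import Mathlib

/-! Push a coupling `γ` of `μ` and `ν` forward by `(x, y) ↦ (x + ψ x, y + ψ̃ y)`; this couples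
the two image measures. By Minkowski's inequality its cost, after the `p`-th root, is at most
the `L^p(γ)` norm of `(x + ψ x) - (y + ψ y)`, which the Lipschitz bound controls by `C ‖x - y‖`,
plus the `L^p(γ)` norm of `ψ y - ψ̃ y`, which only sees the second marginal `ν`. Taking the
infimum over `γ` gives the claim. -/

open MeasureTheory ENNReal NNReal ProbabilityTheory

noncomputable section

variable {E : Type*} [NormedAddCommGroup E] [MeasurableSpace E]

/-- The set Π(μ,ν) of couplings of `μ` and `ν`: measures on the product whose
first marginal is `μ` and second marginal is `ν`. -/
def couplings (μ ν : Measure E) : Set (Measure (E × E)) :=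
  {γ | γ.map Prod.fst = μ ∧ γ.map Prod.snd = ν}

/-- The Kantorovich transport cost `∫ ‖x - y‖^p dγ(x,y)`. -/
def transportCost (p : ℝ) (γ : Measure (E × E)) : ℝ≥0∞ :=
  ∫⁻ z, (‖z.1 - z.2‖₊ : ℝ≥0∞) ^ p ∂γ

/-- `W_p(μ,ν)^p = inf_{γ ∈ Π(μ,ν)} ∫ ‖x-y‖^p dγ`. -/
def wassersteinPow (p : ℝ) (μ ν : Measure E) : ℝ≥0∞ :=
  ⨅ γ ∈ couplings μ ν, transportCost p γ

/-- The `p`-Wasserstein distance `W_p(μ,ν)`. -/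
def wasserstein (p : ℝ) (μ ν : Measure E) : ℝ≥0∞ :=
  wassersteinPow p μ ν ^ (1 / p)

/-- Membership in the Wasserstein space `P_p`: a Borel probability measure with
finite `p`-th moment. -/
def MemPp (p : ℝ) (μ : Measure E) : Prop :=
  IsProbabilityMeasure μ ∧ ∫⁻ x, (‖x‖₊ : ℝ≥0∞) ^ p ∂μ < ∞

theorem prod_mem_couplings {α : Type*} [MeasurableSpace α] (μ ν : Measure α)
    [IsProbabilityMeasure μ] [IsProbabilityMeasure ν] :
    μ.prod ν ∈ couplings μ ν := by
  constructor <;> simp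

theorem map_prodMap_mem_couplings {α β : Type*} [MeasurableSpace α] [MeasurableSpace β]
    {μ ν : Measure α} {γ : Measure (α × α)} (hγ : γ ∈ couplings μ ν) {F G : α → β}
    (hF : Measurable F) (hG : Measurable G) :
    γ.map (Prod.map F G) ∈ couplings (μ.map F) (ν.map G) := by
  obtain ⟨hγ₁, hγ₂⟩ := hγ
  constructor
  · rw [Measure.map_map measurable_fst (hF.prodMap hG), ← hγ₁, Measure.map_map hF measurable_fst]
    rfl
  · rw [Measure.map_map measurable_snd (hF.prodMap hG), ← hγ₂, Measure.map_map hG measurable_snd]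
    rfl

theorem wasserstein_eq_iInf_rpow {p : ℝ} (hp : 0 < p) (μ ν : Measure E) :
    wasserstein p μ ν = ⨅ γ ∈ couplings μ ν, transportCost p γ ^ (1 / p) :=
  (ENNReal.orderIsoRpow (1 / p) (one_div_pos.2 hp)).map_iInf₂ _

theorem wasserstein_le_transportCost_rpow {p : ℝ} (hp : 0 < p) {μ ν : Measure E}
    {γ : Measure (E × E)} (hγ : γ ∈ couplings μ ν) :
    wasserstein p μ ν ≤ transportCost p γ ^ (1 / p) := by
  rw [wasserstein_eq_iInf_rpow hp]
  exact iInf₂_le γ hγ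

theorem le_mul_wasserstein_add_of_forall_mem_couplings {p : ℝ} (hp : 0 < p) {μ ν : Measure E}
    (hne : (couplings μ ν).Nonempty) {a C D : ℝ≥0∞} (hC : C ≠ ∞)
    (h : ∀ γ ∈ couplings μ ν, a ≤ C * transportCost p γ ^ (1 / p) + D) :
    a ≤ C * wasserstein p μ ν + D := by
  have : Nonempty (couplings μ ν) := hne.to_subtype
  rw [wasserstein_eq_iInf_rpow hp, iInf_subtype', ENNReal.mul_iInf (by simp [hC]),
    ENNReal.iInf_add]
  exact le_iInf fun γ => h γ.1 γ.2

section TransportCost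

variable [BorelSpace E] [SecondCountableTopology E]

theorem measurable_nnnorm_sub_rpow (p : ℝ) :
    Measurable fun z : E × E => (‖z.1 - z.2‖₊ : ℝ≥0∞) ^ p :=
  ((measurable_fst.sub measurable_snd).nnnorm.coe_nnreal_ennreal).pow_const p

theorem transportCost_map_prodMap (p : ℝ) (γ : Measure (E × E)) {F G : E → E}
    (hF : Measurable F) (hG : Measurable G) :
    transportCost p (γ.map (Prod.map F G)) = ∫⁻ z, (‖F z.1 - G z.2‖₊ : ℝ≥0∞) ^ p ∂γ :=
  lintegral_map (measurable_nnnorm_sub_rpow p) (hF.prodMap hG)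

theorem lintegral_nnnorm_sub_rpow_le_of_lipschitzWith {p : ℝ} (hp : 0 < p) (γ : Measure (E × E))
    {F : E → E} {C : ℝ≥0} (hF : LipschitzWith C F) :
    (∫⁻ z, (‖F z.1 - F z.2‖₊ : ℝ≥0∞) ^ p ∂γ) ^ (1 / p) ≤ C * transportCost p γ ^ (1 / p) := by
  have hpointwise : ∀ z : E × E,
      (‖F z.1 - F z.2‖₊ : ℝ≥0∞) ^ p ≤ (C : ℝ≥0∞) ^ p * (‖z.1 - z.2‖₊ : ℝ≥0∞) ^ p := fun z => by
    rw [← ENNReal.mul_rpow_of_nonneg _ _ hp.le, ← ENNReal.coe_mul]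
    gcongr
    simpa only [nndist_eq_nnnorm] using hF.nndist_le z.1 z.2
  calc (∫⁻ z, (‖F z.1 - F z.2‖₊ : ℝ≥0∞) ^ p ∂γ) ^ (1 / p)
      ≤ ((C : ℝ≥0∞) ^ p * transportCost p γ) ^ (1 / p) := by
        rw [transportCost, ← lintegral_const_mul _ (measurable_nnnorm_sub_rpow p)]
        exact ENNReal.rpow_le_rpow (lintegral_mono hpointwise) (by positivity)
    _ = C * transportCost p γ ^ (1 / p) := by
        rw [ENNReal.mul_rpow_of_nonneg _ _ (by positivity), ← ENNReal.rpow_mul,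
          mul_one_div_cancel hp.ne', ENNReal.rpow_one]

theorem transportCost_map_prodMap_rpow_le {p : ℝ} (hp : 1 ≤ p) {μ ν : Measure E}
    {γ : Measure (E × E)} (hγ : γ ∈ couplings μ ν) {F G : E → E} {C : ℝ≥0}
    (hF : LipschitzWith C F) (hG : Measurable G) :
    transportCost p (γ.map (Prod.map F G)) ^ (1 / p) ≤
      C * transportCost p γ ^ (1 / p) + (∫⁻ x, (‖F x - G x‖₊ : ℝ≥0∞) ^ p ∂ν) ^ (1 / p) := by
  have hp₀ : 0 < p := zero_lt_one.trans_le hp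
  have hFm : Measurable F := hF.continuous.measurable
  have hdiff : Measurable fun x => (‖F x - G x‖₊ : ℝ≥0∞) := (hFm.sub hG).nnnorm.coe_nnreal_ennreal
  have hsnd : ∫⁻ z, (‖F z.2 - G z.2‖₊ : ℝ≥0∞) ^ p ∂γ = ∫⁻ x, (‖F x - G x‖₊ : ℝ≥0∞) ^ p ∂ν := by
    rw [← hγ.2, lintegral_map (hdiff.pow_const p) measurable_snd]
  have htriangle : ∀ z : E × E, (‖F z.1 - G z.2‖₊ : ℝ≥0∞) ^ p ≤
      ((‖F z.1 - F z.2‖₊ : ℝ≥0∞) + ‖F z.2 - G z.2‖₊) ^ p := fun z => by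
    gcongr
    rw [← ENNReal.coe_add, ENNReal.coe_le_coe, ← sub_add_sub_cancel (F z.1) (F z.2) (G z.2)]
    exact nnnorm_add_le _ _
  calc transportCost p (γ.map (Prod.map F G)) ^ (1 / p)
      ≤ (∫⁻ z, ((‖F z.1 - F z.2‖₊ : ℝ≥0∞) + ‖F z.2 - G z.2‖₊) ^ p ∂γ) ^ (1 / p) := by
        rw [transportCost_map_prodMap p γ hFm hG]
        exact ENNReal.rpow_le_rpow (lintegral_mono htriangle) (by positivity)
    _ ≤ (∫⁻ z, (‖F z.1 - F z.2‖₊ : ℝ≥0∞) ^ p ∂γ) ^ (1 / p) +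
          (∫⁻ z, (‖F z.2 - G z.2‖₊ : ℝ≥0∞) ^ p ∂γ) ^ (1 / p) :=
        ENNReal.lintegral_Lp_add_le (by fun_prop) (hdiff.comp measurable_snd).aemeasurable hp
    _ ≤ C * transportCost p γ ^ (1 / p) + (∫⁻ x, (‖F x - G x‖₊ : ℝ≥0∞) ^ p ∂ν) ^ (1 / p) := by
        rw [hsnd]
        gcongr
        exact lintegral_nnnorm_sub_rpow_le_of_lipschitzWith hp₀ γ hF

theorem wasserstein_map_le {p : ℝ} (hp : 1 ≤ p) {μ ν : Measure E} [IsProbabilityMeasure μ]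
    [IsProbabilityMeasure ν] {F G : E → E} {C : ℝ≥0} (hF : LipschitzWith C F) (hG : Measurable G) :
    wasserstein p (μ.map F) (ν.map G) ≤
      C * wasserstein p μ ν + (∫⁻ x, (‖F x - G x‖₊ : ℝ≥0∞) ^ p ∂ν) ^ (1 / p) := by
  have hp₀ : 0 < p := zero_lt_one.trans_le hp
  refine le_mul_wasserstein_add_of_forall_mem_couplings hp₀ ⟨_, prod_mem_couplings μ ν⟩
    coe_ne_top fun γ hγ => ?_
  exact (wasserstein_le_transportCost_rpow hp₀
    (map_prodMap_mem_couplings hγ hF.continuous.measurable hG)).trans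
    (transportCost_map_prodMap_rpow_le hp hγ hF hG)

end TransportCost

theorem one_step_stability_general {d : ℕ} (p : ℝ) (hp : 1 ≤ p)
    (μ ν : Measure (EuclideanSpace ℝ (Fin d))) (hμ : MemPp p μ) (hν : MemPp p ν)
    (ψ ψt : EuclideanSpace ℝ (Fin d) → EuclideanSpace ℝ (Fin d))
    (hψt : Measurable ψt)
    (C : ℝ≥0) (hC : LipschitzWith C (fun x => x + ψ x)) :
    wasserstein p (μ.map (fun x => x + ψ x)) (ν.map (fun x => x + ψt x)) ≤
      (C : ℝ≥0∞) * wasserstein p μ ν +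
        (∫⁻ x, (‖ψ x - ψt x‖₊ : ℝ≥0∞) ^ p ∂ν) ^ (1 / p) := by
  have : IsProbabilityMeasure μ := hμ.1
  have : IsProbabilityMeasure ν := hν.1
  simpa only [add_sub_add_left_eq_sub] using
    wasserstein_map_le (μ := μ) (ν := ν) hp hC (G := fun x => x + ψt x) (by fun_prop)

/-- one-step stability of the inverse multiscale transform. -/
theorem one_step_stability {d : ℕ} (p : ℝ) (hp : 1 ≤ p)
    (μ ν : Measure (EuclideanSpace ℝ (Fin d))) (hμ : MemPp p μ) (hν : MemPp p ν)
    (ψ ψt : EuclideanSpace ℝ (Fin d) → EuclideanSpace ℝ (Fin d))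
    (hψ : Measurable ψ) (hψt : Measurable ψt)
    (hψtint : ∫⁻ x, (‖ψt x‖₊ : ℝ≥0∞) ^ p ∂ν < ∞)
    (C : ℝ≥0) (hC : LipschitzWith C (fun x => x + ψ x)) :
    wasserstein p (μ.map (fun x => x + ψ x)) (ν.map (fun x => x + ψt x)) ≤
      (C : ℝ≥0∞) * wasserstein p μ ν +
        (∫⁻ x, (‖ψ x - ψt x‖₊ : ℝ≥0∞) ^ p ∂ν) ^ (1 / p) :=
  one_step_stability_general p hp μ ν hμ hν ψ ψt hψt C hC
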